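/- arXiv:1806.02754 — 2 statements merged into one kernel-verified Lean document; each statement's English description precedes it below -/
import Mathlib

section
/- Let X be a Gamma-distributed random variable with shape parameter k_s and scale σ_h², and let Z be an independent random variable with ‖Z‖² Gamma-distributed with shape m and scale σ² (i.e., the squared norm of an m-dimensional complex Gaussian vector of per-entry variance σ²). Then P(‖Z‖² ≥ X) = (σ²/(σ² + σ_h²))^{k_s} · ∑_{j=0}^{m-1} (Γ(k_s+j)/(Γ(k_s) j!)) · (σ_h²/(σ²+σ_h²))^{j}. -/
/-!
Conditioning on `X` gives `P(X ≤ Y) = ∫ P(Y ≥ x) dP_X(x)`. For integer shape `m` the Gamma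
tail is the Erlang formula `P(Y ≥ x) = e^{-sx} ∑_{j<m} (sx)^j / j!`, and multiplying the Gamma(a, r)
density by the term `e^{-sx} (sx)^j / j!` gives a constant multiple of the Gamma(a + j, r + s)
density, whose total mass is 1.
-/

open MeasureTheory ProbabilityTheory Real Set Filter Topology
open scoped Nat

namespace ProbabilityTheory

lemma measure_le_eq_lintegral_map_Ici {Ω : Type*} [MeasurableSpace Ω] {P : Measure Ω}
    [IsFiniteMeasure P] {X Y : Ω → ℝ} (hX : Measurable X) (hY : Measurable Y)
    (hXY : IndepFun X Y P) :
    P {ω | X ω ≤ Y ω} = ∫⁻ x, P.map Y (Ici x) ∂(P.map X) := by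
  have hle : MeasurableSet {p : ℝ × ℝ | p.1 ≤ p.2} :=
    measurableSet_le measurable_fst measurable_snd
  rw [show {ω | X ω ≤ Y ω} = (fun ω ↦ (X ω, Y ω)) ⁻¹' {p | p.1 ≤ p.2} from rfl,
    ← Measure.map_apply (hX.prodMk hY) hle,
    (indepFun_iff_map_prod_eq_prod_map_map hX.aemeasurable hY.aemeasurable).mp hXY,
    Measure.prod_apply hle]
  rfl

lemma integrable_gammaPDFReal {a r : ℝ} (ha : 0 < a) (hr : 0 < r) :
    Integrable (gammaPDFReal a r) := by
  have h := integrable_toReal_of_lintegral_ne_top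
    (measurable_gammaPDFReal a r).ennreal_ofReal.aemeasurable
    (by rw [show (fun x ↦ ENNReal.ofReal (gammaPDFReal a r x)) = gammaPDF a r from rfl,
      lintegral_gammaPDF_eq_one ha hr]; exact ENNReal.one_ne_top)
  simpa [ENNReal.toReal_ofReal (gammaPDFReal_nonneg ha hr _)] using h

lemma gammaPDFReal_natCast_add_one (n : ℕ) (r : ℝ) {t : ℝ} (ht : 0 ≤ t) :
    gammaPDFReal (n + 1) r t = r * ((r * t) ^ n / n !) * exp (-(r * t)) := by
  rw [gammaPDFReal, if_pos ht, add_sub_cancel_right, Gamma_nat_eq_factorial,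
    ← Nat.cast_add_one, rpow_natCast, rpow_natCast]
  ring

lemma hasDerivAt_sum_range_pow_div_factorial (n : ℕ) (r t : ℝ) :
    HasDerivAt (fun t ↦ ∑ j ∈ Finset.range (n + 1), (r * t) ^ j / j !)
      (r * ∑ j ∈ Finset.range n, (r * t) ^ j / j !) t := by
  have hterm (j : ℕ) :
      HasDerivAt (fun t ↦ (r * t) ^ j / j !) (j * (r * t) ^ (j - 1) * r / j !) t := by
    simpa using (((hasDerivAt_id t).const_mul r).pow j).div_const (j ! : ℝ)
  refine (HasDerivAt.fun_sum fun j _ ↦ hterm j).congr_deriv ?_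
  rw [Finset.sum_range_succ', Finset.mul_sum]
  simp only [Nat.cast_zero, zero_mul, zero_div, add_zero]
  refine Finset.sum_congr rfl fun j _ ↦ ?_
  rw [Nat.factorial_succ, Nat.add_sub_cancel]
  push_cast
  field_simp

lemma integral_Ioi_gammaPDFReal_natCast_add_one (n : ℕ) {r : ℝ} (hr : 0 < r) {x : ℝ}
    (hx : 0 ≤ x) :
    ∫ t in Ioi x, gammaPDFReal (n + 1) r t
      = exp (-(r * x)) * ∑ j ∈ Finset.range (n + 1), (r * x) ^ j / j ! := by
  set F : ℝ → ℝ := fun t ↦ -(exp (-(r * t)) * ∑ j ∈ Finset.range (n + 1), (r * t) ^ j / j !)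
  have hderiv : ∀ t ∈ Ici x, HasDerivAt F (gammaPDFReal (n + 1) r t) t := by
    intro t ht
    have hexp : HasDerivAt (fun t ↦ exp (-(r * t))) (exp (-(r * t)) * (-r)) t := by
      simpa using (((hasDerivAt_id t).const_mul r).neg).exp
    have hsum := hasDerivAt_sum_range_pow_div_factorial n r t
    refine (hexp.fun_mul hsum).fun_neg.congr_deriv ?_
    rw [gammaPDFReal_natCast_add_one n r (hx.trans ht), Finset.sum_range_succ]
    ring
  have hterm (j : ℕ) : Tendsto (fun t ↦ exp (-(r * t)) * ((r * t) ^ j / j !)) atTop (𝓝 0) := by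
    have := ((tendsto_pow_mul_exp_neg_atTop_nhds_zero j).comp
      (tendsto_id.const_mul_atTop hr)).div_const (j ! : ℝ)
    rw [zero_div] at this
    exact this.congr fun t ↦ by simp only [Function.comp, id]; ring
  have hF : Tendsto F atTop (𝓝 0) := by
    simpa [F, Finset.mul_sum] using (tendsto_finsetSum _ fun j _ ↦ hterm j).neg
  rw [integral_Ioi_of_hasDerivAt_of_tendsto' hderiv
    ((integrable_gammaPDFReal (by positivity) hr).integrableOn) hF]
  ring

lemma gammaMeasure_Ici {m : ℕ} (hm : 0 < m) {r : ℝ} (hr : 0 < r) {x : ℝ} (hx : 0 ≤ x) :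
    gammaMeasure m r (Ici x)
      = ENNReal.ofReal (exp (-(r * x)) * ∑ j ∈ Finset.range m, (r * x) ^ j / j !) := by
  obtain ⟨n, rfl⟩ : ∃ n, m = n + 1 := ⟨m - 1, by omega⟩
  rw [gammaMeasure, withDensity_apply _ measurableSet_Ici, Nat.cast_add_one,
    ← integral_Ioi_gammaPDFReal_natCast_add_one n hr hx, ← integral_Ici_eq_integral_Ioi,
    ofReal_integral_eq_lintegral_ofReal
      (integrable_gammaPDFReal (by positivity) hr).integrableOn
      (ae_of_all _ (gammaPDFReal_nonneg (by positivity) hr))]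
  rfl

lemma lintegral_gammaPDF_mul_exp_neg_mul_pow {a r s : ℝ} (ha : 0 < a) (hr : 0 < r) (hs : 0 < s)
    (j : ℕ) :
    ∫⁻ x, gammaPDF a r x * ENNReal.ofReal (exp (-(s * x)) * ((s * x) ^ j / j !))
      = ENNReal.ofReal
          ((r / (r + s)) ^ a * (Gamma (a + j) / (Gamma a * j !) * (s / (r + s)) ^ j)) := by
  set C := (r / (r + s)) ^ a * (Gamma (a + j) / (Gamma a * j !) * (s / (r + s)) ^ j) with hC
  have hpoint : ∀ x ≠ 0, gammaPDF a r x * ENNReal.ofReal (exp (-(s * x)) * ((s * x) ^ j / j !))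
      = ENNReal.ofReal C * gammaPDF (a + j) (r + s) x := by
    intro x hx0
    rcases hx0.lt_or_gt with hx | hx
    · simp [gammaPDF_of_neg hx]
    rw [gammaPDF_of_nonneg hx.le, gammaPDF_of_nonneg hx.le, ← ENNReal.ofReal_mul (by positivity),
      ← ENNReal.ofReal_mul (by positivity)]
    congr 1
    have hΓ : Gamma (a + j) ≠ 0 := (Gamma_pos_of_pos (by positivity)).ne'
    have hΓa : Gamma a ≠ 0 := (Gamma_pos_of_pos ha).ne'
    rw [hC, div_rpow hr.le (by positivity), rpow_add_natCast (by positivity),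
      show a + j - 1 = (a - 1) + j by ring, rpow_add_natCast hx.ne',
      show -((r + s) * x) = -(r * x) + -(s * x) by ring, exp_add, div_pow]
    field_simp
    ring
  rw [lintegral_congr_ae ((Measure.ae_ne volume 0).mono hpoint),
    lintegral_const_mul' _ _ ENNReal.ofReal_ne_top,
    lintegral_gammaPDF_eq_one (by positivity) (by positivity), mul_one]

lemma lintegral_gammaMeasure_Ici {a r s : ℝ} (ha : 0 < a) (hr : 0 < r) (hs : 0 < s) {m : ℕ}
    (hm : 0 < m) :
    ∫⁻ x, gammaMeasure m s (Ici x) ∂(gammaMeasure a r)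
      = ENNReal.ofReal ((r / (r + s)) ^ a *
          ∑ j ∈ Finset.range m, Gamma (a + j) / (Gamma a * j !) * (s / (r + s)) ^ j) := by
  have htail_meas : Measurable fun x ↦ gammaMeasure m s (Ici x) :=
    Antitone.measurable fun x y hxy ↦ measure_mono (Ici_subset_Ici.mpr hxy)
  have hexpand (x : ℝ) : gammaPDF a r x * gammaMeasure m s (Ici x)
      = ∑ j ∈ Finset.range m,
          gammaPDF a r x * ENNReal.ofReal (exp (-(s * x)) * ((s * x) ^ j / j !)) := by
    rcases lt_or_ge x 0 with hx | hx
    · simp [gammaPDF_of_neg hx]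
    rw [gammaMeasure_Ici hm hs hx, Finset.mul_sum, ENNReal.ofReal_sum_of_nonneg
      (fun j _ ↦ by positivity), Finset.mul_sum]
  rw [show gammaMeasure a r = volume.withDensity (gammaPDF a r) from rfl,
    lintegral_withDensity_eq_lintegral_mul _
      (show Measurable (gammaPDF a r) from (measurable_gammaPDFReal a r).ennreal_ofReal)
      htail_meas]
  calc ∫⁻ x, gammaPDF a r x * gammaMeasure m s (Ici x)
      = ∑ j ∈ Finset.range m,
          ∫⁻ x, gammaPDF a r x * ENNReal.ofReal (exp (-(s * x)) * ((s * x) ^ j / j !)) := by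
        simp_rw [hexpand]
        exact lintegral_finsetSum _ fun j _ ↦
          (measurable_gammaPDFReal a r).ennreal_ofReal.mul (by fun_prop)
    _ = _ := by
        simp_rw [lintegral_gammaPDF_mul_exp_neg_mul_pow ha hr hs, Finset.mul_sum]
        rw [ENNReal.ofReal_sum_of_nonneg fun j _ ↦ by positivity]

end ProbabilityTheory

/-- Let `X` be Gamma with shape `ks` and scale `σh²` (rate `1/σh²`) and let `Y = ‖Z‖²` be
an independent Gamma random variable with shape `m` and scale `σ²` (rate `1/σ²`). Then
`P(Y ≥ X) = (σ²/(σ² + σh²))^ks · ∑_{j=0}^{m-1} (Γ(ks+j)/(Γ(ks) j!)) (σh²/(σ²+σh²))^j`. -/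
theorem stmt_3 {Ω : Type*} [MeasurableSpace Ω] (P : Measure Ω) [IsProbabilityMeasure P]
    (ks m : ℕ) (hks : 0 < ks) (hm : 0 < m) (σh σ : ℝ) (hσh : 0 < σh) (hσ : 0 < σ)
    (X Y : Ω → ℝ) (hX : Measurable X) (hY : Measurable Y)
    (hlawX : Measure.map X P = gammaMeasure (ks : ℝ) (σh ^ 2)⁻¹)
    (hlawY : Measure.map Y P = gammaMeasure (m : ℝ) (σ ^ 2)⁻¹)
    (hindep : IndepFun X Y P) :
    P {ω | Y ω ≥ X ω} =
      ENNReal.ofReal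
        ((σ ^ 2 / (σ ^ 2 + σh ^ 2)) ^ ks *
          ∑ j ∈ Finset.range m,
            Real.Gamma ((ks : ℝ) + (j : ℝ)) / (Real.Gamma (ks : ℝ) * (Nat.factorial j : ℝ)) *
              (σh ^ 2 / (σ ^ 2 + σh ^ 2)) ^ j) := by
  have hrateX : (σh ^ 2)⁻¹ / ((σh ^ 2)⁻¹ + (σ ^ 2)⁻¹) = σ ^ 2 / (σ ^ 2 + σh ^ 2) := by
    field_simp
  have hrateY : (σ ^ 2)⁻¹ / ((σh ^ 2)⁻¹ + (σ ^ 2)⁻¹) = σh ^ 2 / (σ ^ 2 + σh ^ 2) := by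
    field_simp
  rw [show {ω | Y ω ≥ X ω} = {ω | X ω ≤ Y ω} from rfl,
    measure_le_eq_lintegral_map_Ici hX hY hindep, hlawX, hlawY,
    lintegral_gammaMeasure_Ici (by positivity) (by positivity) (by positivity) hm,
    hrateX, hrateY, rpow_natCast]
end

section
/- Let X ≥ 0 have density f_X(x) = (∏_{i=0}^{k_s-1} σ_{h,i}^{-2}/Γ(k_s)) x^{k_s-1} on a neighborhood of 0 in the sense that ∫_0^∞ g(x) f(x) dx is evaluated with this density, and let G(x) = ∑_{j=0}^{m-1} x^j e^{-x/σ²}/(j! σ^{2j}). Then ∫_0^∞ G(x) · (∏ σ_{h,i}^{-2}/Γ(k_s)) x^{k_s-1} dx = (σ^{2k_s}/∏_{i=0}^{k_s-1} σ_{h,i}²) · ∑_{j=0}^{m-1} Γ(k_s+j)/(Γ(k_s) j!). -/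
/-! Distributing the density over the finite sum leaves, for each `j`, the Gamma integral
`∫₀^∞ x^(k-1+j) e^(-x/σ²) dx = (k-1+j)! σ^(2(k+j))`,
and `(k-1+j)! = Γ(k+j)` because `k ≥ 1`. -/

open Finset MeasureTheory Set Real
open scoped Nat

lemma integrableOn_pow_mul_exp_neg_div_Ioi (n : ℕ) {s : ℝ} (hs : 0 < s) :
    IntegrableOn (fun x : ℝ => x ^ n * exp (-x / s)) (Ioi 0) := by
  refine (integrableOn_rpow_mul_exp_neg_mul_rpow (p := 1) (s := n) (b := s⁻¹)
    (by linarith [n.cast_nonneg (α := ℝ)]) one_pos (inv_pos.2 hs)).congr_fun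
    (fun x _ => ?_) measurableSet_Ioi
  simp only [rpow_one, rpow_natCast, div_eq_inv_mul, neg_mul, mul_neg]

lemma integral_pow_mul_exp_neg_div_Ioi (n : ℕ) {s : ℝ} (hs : 0 < s) :
    ∫ x in Ioi 0, x ^ n * exp (-x / s) = n ! * s ^ (n + 1) := by
  have h := integral_rpow_mul_exp_neg_mul_Ioi (a := n + 1) (by positivity) (inv_pos.2 hs)
  rw [add_sub_cancel_right, one_div, inv_inv, Gamma_nat_eq_factorial] at h
  norm_cast at h
  rw [mul_comm, ← h]
  refine setIntegral_congr_fun measurableSet_Ioi (fun x _ => ?_)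
  simp only [div_eq_inv_mul, mul_neg]

theorem stmt_19_general (m ks : ℕ) (hks : 0 < ks)
    (σ : ℝ) (hσ : 0 < σ) (σh : ℕ → ℝ) :
    ∫ x in Set.Ioi (0 : ℝ),
        (∑ j ∈ Finset.range m,
            x ^ j * Real.exp (-x / σ ^ 2) / ((Nat.factorial j : ℝ) * σ ^ (2 * j))) *
          ((∏ i ∈ Finset.range ks, ((σh i) ^ 2)⁻¹) / Real.Gamma ks * x ^ (ks - 1)) =
      (σ ^ (2 * ks) / ∏ i ∈ Finset.range ks, (σh i) ^ 2) *
        ∑ j ∈ Finset.range m,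
          Real.Gamma ((ks : ℝ) + (j : ℝ)) / (Real.Gamma (ks : ℝ) * (Nat.factorial j : ℝ)) := by
  set C := (∏ i ∈ range ks, (σh i ^ 2)⁻¹) / Gamma ks with hC
  have hσ2 : 0 < σ ^ 2 := by positivity
  calc _ = ∫ x in Ioi 0, ∑ j ∈ range m,
          C / (j ! * σ ^ (2 * j)) * (x ^ (ks - 1 + j) * exp (-x / σ ^ 2)) := by
        congr 1; ext x
        rw [sum_mul]
        refine sum_congr rfl fun j _ => ?_
        ring
    _ = ∑ j ∈ range m,
          C / (j ! * σ ^ (2 * j)) * ((ks - 1 + j) ! * (σ ^ 2) ^ (ks - 1 + j + 1)) := by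
        rw [integral_finsetSum _ fun j _ =>
          (integrableOn_pow_mul_exp_neg_div_Ioi _ hσ2).const_mul _]
        simp_rw [integral_const_mul, integral_pow_mul_exp_neg_div_Ioi _ hσ2]
    _ = _ := by
        rw [mul_sum]
        refine sum_congr rfl fun j _ => ?_
        have hΓ : Gamma (ks + j) = (ks - 1 + j) ! := by
          rw [← Gamma_nat_eq_factorial]; congr 1; push_cast [Nat.cast_sub hks]; ring
        have hpow : (σ ^ 2) ^ (ks - 1 + j + 1) = σ ^ (2 * ks) * σ ^ (2 * j) := by
          rw [← pow_mul, ← pow_add]; congr 1; omega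
        rw [hΓ, hpow, hC, prod_inv_distrib]
        field_simp

/-- Termwise Gamma integration:
`∫_0^∞ (∑_{j<m} x^j e^(-x/σ²)/(j! σ^(2j))) · ((∏_i σ_{h,i}^{-2})/Γ(ks)) x^(ks-1) dx
 = (σ^(2ks)/∏_i σ_{h,i}²) · ∑_{j<m} Γ(ks+j)/(Γ(ks) j!)`. -/
theorem stmt_19 (m ks : ℕ) (hm : 0 < m) (hks : 0 < ks)
    (σ : ℝ) (hσ : 0 < σ) (σh : ℕ → ℝ) (hσh : ∀ i, 0 < σh i) :
    ∫ x in Set.Ioi (0 : ℝ),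
        (∑ j ∈ Finset.range m,
            x ^ j * Real.exp (-x / σ ^ 2) / ((Nat.factorial j : ℝ) * σ ^ (2 * j))) *
          ((∏ i ∈ Finset.range ks, ((σh i) ^ 2)⁻¹) / Real.Gamma ks * x ^ (ks - 1)) =
      (σ ^ (2 * ks) / ∏ i ∈ Finset.range ks, (σh i) ^ 2) *
        ∑ j ∈ Finset.range m,
          Real.Gamma ((ks : ℝ) + (j : ℝ)) / (Real.Gamma (ks : ℝ) * (Nat.factorial j : ℝ)) :=
  stmt_19_general m ks hks σ hσ σh
end
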